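/- arXiv:2011.11547 — 2 statements merged into one kernel-verified Lean document; each statement's English description precedes it below -/
import Mathlib

section
/- Let X be a metric space and λ ≥ 1/2. Suppose that for some M > 0 and r > 0, every ball of radius λr in X can be covered by M balls of radius r/2. Let {B_α = B(x_α, r)}_{α∈A} be a collection of balls such that the balls {B(x_α, r/2)}_{α∈A} are pairwise disjoint. Then every point x ∈ X belongs to at most M of the dilated balls λB_α = B(x_α, λr). -/
open Metric Set

theorem Set.finite_and_ncard_le_card_of_pairwise_disjoint {ι X : Type*} {s : ι → Set X}
    (hs : Pairwise fun i j => Disjoint (s i) (s j)) (S : Set ι) (F : Finset X)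
    (hmeet : ∀ i ∈ S, ∃ c ∈ F, c ∈ s i) :
    S.Finite ∧ S.ncard ≤ F.card := by
  choose c hcF hcs using hmeet
  let g : S → F := fun i => ⟨c i i.2, hcF i i.2⟩
  have hg : Function.Injective g := by
    intro i j hij
    by_contra hne
    have hcj : c i i.2 ∈ s j := by
      rw [show c i i.2 = c j j.2 from congrArg Subtype.val hij]
      exact hcs j j.2
    exact (hs (Subtype.coe_ne_coe.mpr hne)).notMem_of_mem_left (hcs i i.2) hcj
  refine ⟨Set.finite_coe_iff.mp (Finite.of_injective g hg), ?_⟩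
  simpa using Nat.card_le_card_of_injective g hg

theorem stmt0_general {X : Type*} [MetricSpace X] (lam : ℝ)
    (M : ℕ) (r : ℝ)
    (hcov : ∀ y : X, ∃ F : Finset X, F.card ≤ M ∧
      ball y (lam * r) ⊆ ⋃ c ∈ F, ball c (r / 2))
    {A : Type*} (x : A → X)
    (hdisj : Pairwise fun α β => Disjoint (ball (x α) (r / 2)) (ball (x β) (r / 2)))
    (z : X) :
    {α : A | z ∈ ball (x α) (lam * r)}.Finite ∧
      {α : A | z ∈ ball (x α) (lam * r)}.ncard ≤ M := by
  obtain ⟨F, hFM, hFcov⟩ := hcov z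
  have hmeet : ∀ α ∈ {α : A | z ∈ ball (x α) (lam * r)}, ∃ c ∈ F, c ∈ ball (x α) (r / 2) := by
    intro α hα
    obtain ⟨c, hcF, hc⟩ := mem_iUnion₂.mp (hFcov (mem_ball_comm.mp hα))
    exact ⟨c, hcF, mem_ball_comm.mp hc⟩
  obtain ⟨hfin, hcard⟩ := Set.finite_and_ncard_le_card_of_pairwise_disjoint hdisj _ F hmeet
  exact ⟨hfin, hcard.trans hFM⟩

/-- If every ball of radius `λr` can be covered by `M` balls of radius `r/2`, and the balls
`B(x_α, r/2)` are pairwise disjoint, then every point belongs to at most `M` of the dilated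
balls `B(x_α, λr)`. -/
theorem stmt0 {X : Type*} [MetricSpace X] (lam : ℝ) (hlam : 1 / 2 ≤ lam)
    (M : ℕ) (hM : 0 < M) (r : ℝ) (hr : 0 < r)
    (hcov : ∀ y : X, ∃ F : Finset X, F.card ≤ M ∧
      ball y (lam * r) ⊆ ⋃ c ∈ F, ball c (r / 2))
    {A : Type*} (x : A → X)
    (hdisj : Pairwise fun α β => Disjoint (ball (x α) (r / 2)) (ball (x β) (r / 2)))
    (z : X) :
    {α : A | z ∈ ball (x α) (lam * r)}.Finite ∧
      {α : A | z ∈ ball (x α) (lam * r)}.ncard ≤ M :=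
  stmt0_general lam M r hcov x hdisj z
end

section
/- Let v(x) = 1/w(x) where w(x) = |x| log(1/|x|) for 0 < |x| < 1/2 and w(x) = (1/2) log 2 otherwise, on ℝ². Let dν = v dx. Then there exist constants c, C > 0 such that for all sufficiently small r > 0, c · r / log(1/r) ≤ ν(B(0,r)) ≤ C · r / log(1/r). Consequently, for every q > 2, the quantity r · ν(B(0,r))^{1/q} / μ(B(0,r))^{1/2} (with dμ = w dx) tends to infinity as r → 0. -/
/-!
In polar coordinates, `ν(B(0,r)) = 2π ∫₀ʳ dy / log(1/y)` and `μ(B(0,r)) = 2π ∫₀ʳ y² log(1/y) dy`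
for `r ≤ 1/2`. The first integrand is increasing, and at least `1 / (2 log(1/r))` on `(r/2, r)`;
the second is increasing on `(0, 1/2]`. Hence `ν(B(0,r)) ≍ r / log(1/r)` and
`μ(B(0,r)) ≤ 2π r³ log(1/r)`, so the quotient is at least a constant times
`r^(1/q - 1/2) / log(1/r)^(1/q + 1/2)`, which tends to infinity because `1/q < 1/2` and a power
of `1/r` beats any power of `log(1/r)`.
-/

open Metric MeasureTheory Filter
open scoped ENNReal Topology

/-- The weight `w(x) = |x| log(1/|x|)` for `0 < |x| < 1/2`, and `(1/2) log 2` otherwise. -/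
noncomputable def wWeight (x : EuclideanSpace ℝ (Fin 2)) : ℝ :=
  if 0 < ‖x‖ ∧ ‖x‖ < 1 / 2 then ‖x‖ * Real.log (1 / ‖x‖) else (1 / 2) * Real.log 2

open Set Module Real

local notation "ℝ²" => EuclideanSpace ℝ (Fin 2)

section Polar

variable {E : Type*} [NormedAddCommGroup E] [NormedSpace ℝ E] [FiniteDimensional ℝ E]
  [MeasurableSpace E] [BorelSpace E] [Nontrivial E] (μ : Measure E) [μ.IsAddHaarMeasure]

theorem lintegral_fun_norm_addHaar (f : ℝ → ℝ≥0∞) (hf : Measurable f) :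
    ∫⁻ x, f ‖x‖ ∂μ =
      μ.toSphere univ * ∫⁻ y in Ioi (0 : ℝ), ENNReal.ofReal (y ^ (finrank ℝ E - 1)) * f y := by
  have hf' : Measurable fun p : sphere (0 : E) 1 × Ioi (0 : ℝ) => f p.2 :=
    hf.comp (measurable_subtype_coe.comp measurable_snd)
  calc ∫⁻ x, f ‖x‖ ∂μ = ∫⁻ x : ({0}ᶜ : Set E), f ‖(x : E)‖ ∂(μ.comap (↑)) := by
        rw [lintegral_subtype_comap (measurableSet_singleton _).compl fun x => f ‖x‖,
          restrict_compl_singleton]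
    _ = ∫⁻ p, f p.2 ∂μ.toSphere.prod (.volumeIoiPow (finrank ℝ E - 1)) := by
        rw [← μ.measurePreserving_homeomorphUnitSphereProd.lintegral_comp hf']
        simp only [homeomorphUnitSphereProd_apply_snd_coe]
    _ = μ.toSphere univ * ∫⁻ y : Ioi (0 : ℝ), f y ∂.volumeIoiPow (finrank ℝ E - 1) := by
        rw [lintegral_prod _ hf'.aemeasurable]
        simp [lintegral_const, mul_comm]
    _ = _ := by
        rw [Measure.volumeIoiPow, lintegral_withDensity_eq_lintegral_mul _
          (measurable_subtype_coe.pow_const _).ennreal_ofReal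
          (g := fun y : Ioi (0 : ℝ) => f y) (hf.comp measurable_subtype_coe)]
        exact congrArg _ (lintegral_subtype_comap measurableSet_Ioi
          fun y => ENNReal.ofReal (y ^ (finrank ℝ E - 1)) * f y)

theorem withDensity_fun_norm_ball (f : ℝ → ℝ≥0∞) (hf : Measurable f) (r : ℝ) :
    (μ.withDensity fun x => f ‖x‖) (ball 0 r) =
      μ.toSphere univ * ∫⁻ y in Ioo 0 r, ENNReal.ofReal (y ^ (finrank ℝ E - 1)) * f y := by
  have hball : (ball (0 : E) r).indicator (fun x => f ‖x‖) = fun x => (Iio r).indicator f ‖x‖ := by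
    ext x
    simp [indicator]
  rw [withDensity_apply _ measurableSet_ball, ← lintegral_indicator measurableSet_ball, hball,
    lintegral_fun_norm_addHaar μ _ (hf.indicator measurableSet_Iio)]
  simp_rw [← indicator_mul_right _ (fun y => ENNReal.ofReal (y ^ (finrank ℝ E - 1))) f]
  rw [lintegral_indicator measurableSet_Iio, Measure.restrict_restrict measurableSet_Iio,
    Iio_inter_Ioi]

end Polar

theorem toSphere_univ_euclideanSpace_fin_two :
    (volume : Measure ℝ²).toSphere univ = ENNReal.ofReal (2 * π) := by
  rw [Measure.toSphere_apply_univ, finrank_euclideanSpace_fin, EuclideanSpace.volume_ball_fin_two]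
  simp [ENNReal.ofReal_mul]

noncomputable def radialWeight (y : ℝ) : ℝ :=
  if 0 < y ∧ y < 1 / 2 then y * log (1 / y) else (1 / 2) * log 2

theorem wWeight_eq_radialWeight (x : ℝ²) : wWeight x = radialWeight ‖x‖ :=
  rfl

theorem measurable_radialWeight : Measurable radialWeight :=
  Measurable.ite (measurableSet_Ioo (a := (0 : ℝ)) (b := 1 / 2))
    (measurable_id.mul (measurable_log.comp (measurable_const.div measurable_id))) measurable_const

theorem log_one_div_pos {r : ℝ} (hr : 0 < r) (hr1 : r < 1) : 0 < log (1 / r) :=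
  log_pos ((one_lt_div hr).2 hr1)

theorem radialWeight_pos (y : ℝ) : 0 < radialWeight y := by
  unfold radialWeight
  split_ifs with hy
  · exact mul_pos hy.1 (log_one_div_pos hy.1 (by linarith [hy.2]))
  · exact mul_pos one_half_pos (log_pos one_lt_two)

theorem withDensity_wWeight_ball (φ : ℝ → ℝ) (hφ : Measurable φ) {r : ℝ} (hr : r ≤ 1 / 2) :
    (volume.withDensity fun x : ℝ² => ENNReal.ofReal (φ (wWeight x))) (ball 0 r) =
      ENNReal.ofReal (2 * π) * ∫⁻ y in Ioo 0 r, ENNReal.ofReal (y * φ (y * log (1 / y))) := by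
  have h := withDensity_fun_norm_ball (volume : Measure ℝ²)
    (fun y => ENNReal.ofReal (φ (radialWeight y)))
    (hφ.comp measurable_radialWeight).ennreal_ofReal r
  rw [toSphere_univ_euclideanSpace_fin_two, finrank_euclideanSpace_fin] at h
  refine h.trans (congrArg _ (setLIntegral_congr_fun measurableSet_Ioo fun y hy => ?_))
  rw [radialWeight, if_pos ⟨hy.1, hy.2.trans_le hr⟩, pow_one, ← ENNReal.ofReal_mul hy.1.le]

local notation "ν" => volume.withDensity fun x : ℝ² => ENNReal.ofReal (wWeight x)⁻¹

local notation "μ" => volume.withDensity fun x : ℝ² => ENNReal.ofReal (wWeight x)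

theorem nu_ball_eq {r : ℝ} (hr : r ≤ 1 / 2) :
    ν (ball 0 r) = ENNReal.ofReal (2 * π) * ∫⁻ y in Ioo 0 r, ENNReal.ofReal (log (1 / y))⁻¹ := by
  rw [withDensity_wWeight_ball (·⁻¹) measurable_inv hr]
  refine congrArg _ (setLIntegral_congr_fun measurableSet_Ioo fun y hy => ?_)
  rw [mul_inv, mul_inv_cancel_left₀ hy.1.ne']

theorem mu_ball_eq {r : ℝ} (hr : r ≤ 1 / 2) :
    μ (ball 0 r) =
      ENNReal.ofReal (2 * π) * ∫⁻ y in Ioo 0 r, ENNReal.ofReal (y ^ 2 * log (1 / y)) := by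
  refine (withDensity_wWeight_ball id measurable_id hr).trans (congrArg _ ?_)
  refine setLIntegral_congr_fun measurableSet_Ioo fun y _ => ?_
  rw [id, ← mul_assoc, sq]

theorem mu_ball_pos {r : ℝ} (hr : 0 < r) : 0 < μ (ball 0 r) := by
  refine pos_iff_ne_zero.2 fun h => (measure_ball_pos volume (0 : ℝ²) hr).ne' ?_
  have hw : Measurable fun x : ℝ² => ENNReal.ofReal (wWeight x) :=
    (measurable_radialWeight.comp measurable_norm).ennreal_ofReal
  rw [withDensity_apply_eq_zero' hw.aemeasurable] at h
  simpa [wWeight_eq_radialWeight, radialWeight_pos] using h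

theorem setLIntegral_Ioo_le_of_le {f : ℝ → ℝ} {a b M : ℝ} (h : ∀ y ∈ Ioo a b, f y ≤ M) :
    ∫⁻ y in Ioo a b, ENNReal.ofReal (f y) ≤ ENNReal.ofReal M * ENNReal.ofReal (b - a) :=
  calc ∫⁻ y in Ioo a b, ENNReal.ofReal (f y) ≤ ∫⁻ _ in Ioo a b, ENNReal.ofReal M :=
        setLIntegral_mono' measurableSet_Ioo fun y hy => ENNReal.ofReal_le_ofReal (h y hy)
    _ = _ := by rw [setLIntegral_const, Real.volume_Ioo]

theorem le_setLIntegral_Ioo_of_le {f : ℝ → ℝ} {a b m : ℝ} (h : ∀ y ∈ Ioo a b, m ≤ f y) :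
    ENNReal.ofReal m * ENNReal.ofReal (b - a) ≤ ∫⁻ y in Ioo a b, ENNReal.ofReal (f y) :=
  calc ENNReal.ofReal m * ENNReal.ofReal (b - a) = ∫⁻ _ in Ioo a b, ENNReal.ofReal m := by
        rw [setLIntegral_const, Real.volume_Ioo]
    _ ≤ _ := setLIntegral_mono' measurableSet_Ioo fun y hy => ENNReal.ofReal_le_ofReal (h y hy)

theorem log_one_div_le_two_mul {r y : ℝ} (hr : 0 < r) (hr2 : r ≤ 1 / 2) (hy : r / 2 ≤ y) :
    log (1 / y) ≤ 2 * log (1 / r) := by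
  have h2r : 2 ≤ 1 / r := by rw [le_div_iff₀ hr]; linarith
  have hy0 : 0 < y := by linarith
  rw [show 2 * log (1 / r) = log ((1 / r) ^ 2) by rw [log_pow]; norm_num]
  refine log_le_log (by positivity) ?_
  calc 1 / y ≤ 2 * (1 / r) := by
        rw [div_le_iff₀ (by positivity)]; field_simp; linarith
    _ ≤ (1 / r) ^ 2 := by nlinarith

theorem sq_mul_log_one_div_le {r y : ℝ} (hy : 0 < y) (hyr : y ≤ r) (hr : r ≤ 1 / 2) :
    y ^ 2 * log (1 / y) ≤ r ^ 2 * log (1 / r) := by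
  have hr0 : 0 < r := hy.trans_le hyr
  have hL : 1 / 2 ≤ log (1 / r) :=
    calc (1 : ℝ) / 2 ≤ log 2 := by linarith [log_two_gt_d9]
      _ ≤ log (1 / r) := log_le_log two_pos (by rw [le_div_iff₀ hr0]; linarith)
  have hsplit : log (1 / y) = log (1 / r) + log (r / y) := by
    rw [← log_mul (by positivity) (by positivity)]; field_simp
  have hlog : y * log (r / y) ≤ r - y := by
    have := log_le_sub_one_of_pos (div_pos hr0 hy)
    rw [div_sub_one hy.ne', le_div_iff₀ hy] at this
    linarith
  rw [hsplit]
  nlinarith [mul_le_mul_of_nonneg_left hlog hy.le, mul_self_nonneg (r - y),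
    mul_nonneg (mul_nonneg (sub_nonneg.2 hyr) (add_pos hr0 hy).le) (sub_nonneg.2 hL)]

theorem nu_ball_le {r : ℝ} (hr0 : 0 < r) (hr : r ≤ 1 / 2) :
    ν (ball 0 r) ≤ ENNReal.ofReal (2 * π * r / log (1 / r)) := by
  have hL : 0 < log (1 / r) := log_one_div_pos hr0 (by linarith)
  have hint : ∫⁻ y in Ioo 0 r, ENNReal.ofReal (log (1 / y))⁻¹ ≤
      ENNReal.ofReal (log (1 / r))⁻¹ * ENNReal.ofReal (r - 0) :=
    setLIntegral_Ioo_le_of_le fun y hy =>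
      inv_anti₀ hL (log_le_log (by positivity) (one_div_le_one_div_of_le hy.1 hy.2.le))
  calc ν (ball 0 r) ≤ ENNReal.ofReal (2 * π) *
        (ENNReal.ofReal (log (1 / r))⁻¹ * ENNReal.ofReal (r - 0)) := by
        rw [nu_ball_eq hr]; gcongr
    _ = _ := by
        rw [← ENNReal.ofReal_mul (by positivity), ← ENNReal.ofReal_mul (by positivity)]
        congr 1; ring

theorem le_nu_ball {r : ℝ} (hr0 : 0 < r) (hr : r ≤ 1 / 2) :
    ENNReal.ofReal (π / 2 * r / log (1 / r)) ≤ ν (ball 0 r) := by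
  have hL : 0 < log (1 / r) := log_one_div_pos hr0 (by linarith)
  have hint : ENNReal.ofReal (2 * log (1 / r))⁻¹ * ENNReal.ofReal (r - r / 2) ≤
      ∫⁻ y in Ioo (r / 2) r, ENNReal.ofReal (log (1 / y))⁻¹ :=
    le_setLIntegral_Ioo_of_le fun y hy =>
      inv_anti₀ (log_one_div_pos (by linarith [hy.1]) (by linarith [hy.2]))
        (log_one_div_le_two_mul hr0 hr hy.1.le)
  calc ENNReal.ofReal (π / 2 * r / log (1 / r)) = ENNReal.ofReal (2 * π) *
        (ENNReal.ofReal (2 * log (1 / r))⁻¹ * ENNReal.ofReal (r - r / 2)) := by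
        rw [← ENNReal.ofReal_mul (by positivity), ← ENNReal.ofReal_mul (by positivity)]
        congr 1; field_simp; ring
    _ ≤ ENNReal.ofReal (2 * π) * ∫⁻ y in Ioo 0 r, ENNReal.ofReal (log (1 / y))⁻¹ := by
        gcongr
        exact hint.trans (lintegral_mono_set (Ioo_subset_Ioo_left (by positivity)))
    _ = ν (ball 0 r) := (nu_ball_eq hr).symm

theorem mu_ball_le {r : ℝ} (hr0 : 0 < r) (hr : r ≤ 1 / 2) :
    μ (ball 0 r) ≤ ENNReal.ofReal (2 * π * r ^ 3 * log (1 / r)) := by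
  have hL : 0 < log (1 / r) := log_one_div_pos hr0 (by linarith)
  have hint : ∫⁻ y in Ioo 0 r, ENNReal.ofReal (y ^ 2 * log (1 / y)) ≤
      ENNReal.ofReal (r ^ 2 * log (1 / r)) * ENNReal.ofReal (r - 0) :=
    setLIntegral_Ioo_le_of_le fun y hy => sq_mul_log_one_div_le hy.1 hy.2.le hr
  calc μ (ball 0 r) ≤ ENNReal.ofReal (2 * π) *
        (ENNReal.ofReal (r ^ 2 * log (1 / r)) * ENNReal.ofReal (r - 0)) := by
        rw [mu_ball_eq hr]; gcongr
    _ = _ := by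
        rw [← ENNReal.ofReal_mul (by positivity), ← ENNReal.ofReal_mul (by positivity)]
        congr 1; ring

theorem tendsto_one_div_rpow_div_log_rpow_nhdsGT_zero {s : ℝ} (hs : 0 < s) (b : ℝ) :
    Tendsto (fun r => (1 / r) ^ s / log (1 / r) ^ b) (𝓝[>] 0) atTop := by
  have hL : Tendsto (fun r : ℝ => log (1 / r)) (𝓝[>] 0) atTop := by
    simpa only [one_div, Function.comp_def] using tendsto_log_atTop.comp tendsto_inv_nhdsGT_zero
  refine ((tendsto_exp_mul_div_rpow_atTop b s hs).comp hL).congr' ?_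
  filter_upwards [self_mem_nhdsWithin] with r (hr : 0 < r)
  simp only [Function.comp, rpow_def_of_pos (one_div_pos.2 hr), mul_comm]

theorem rpow_div_log_rpow_eq {a r L c C : ℝ} (hr : 0 < r) (hL : 0 < L) (hc : 0 < c) (hC : 0 < C) :
    c ^ a / C ^ (1 / 2 : ℝ) * ((1 / r) ^ (1 / 2 - a) / L ^ (a + 1 / 2)) =
      r * (c * r / L) ^ a / (C * r ^ 3 * L) ^ (1 / 2 : ℝ) := by
  have hr' : (1 / r) ^ (1 / 2 - a) = r ^ a / r ^ (1 / 2 : ℝ) := by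
    rw [one_div, inv_rpow hr.le, ← rpow_neg hr.le, neg_sub, rpow_sub hr]
  have hr3 : (r ^ 3) ^ (1 / 2 : ℝ) = r * r ^ (1 / 2 : ℝ) := by
    rw [← rpow_natCast, ← rpow_mul hr.le, show ((3 : ℕ) : ℝ) * (1 / 2) = 1 + 1 / 2 by norm_num,
      rpow_add hr, rpow_one]
  rw [hr', rpow_add hL, div_rpow (by positivity) hL.le, mul_rpow hc.le hr.le,
    mul_rpow (by positivity) hL.le, mul_rpow hC.le (by positivity), hr3]
  field_simp

theorem le_rpow_nu_ball_div_rpow_mu_ball {q r : ℝ} (hq : 0 < q) (hr0 : 0 < r) (hr : r ≤ 1 / 2) :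
    (π / 2) ^ (1 / q) / (2 * π) ^ (1 / 2 : ℝ) *
        ((1 / r) ^ (1 / 2 - 1 / q) / log (1 / r) ^ (1 / q + 1 / 2)) ≤
      r * (ν (ball 0 r)).toReal ^ (1 / q) / (μ (ball 0 r)).toReal ^ (1 / 2 : ℝ) := by
  have hL : 0 < log (1 / r) := log_one_div_pos hr0 (by linarith)
  have hν : π / 2 * r / log (1 / r) ≤ (ν (ball 0 r)).toReal :=
    (ENNReal.ofReal_le_iff_le_toReal (ne_top_of_le_ne_top ENNReal.ofReal_ne_top
      (nu_ball_le hr0 hr))).1 (le_nu_ball hr0 hr)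
  have hμ : (μ (ball 0 r)).toReal ≤ 2 * π * r ^ 3 * log (1 / r) :=
    ENNReal.toReal_le_of_le_ofReal (by positivity) (mu_ball_le hr0 hr)
  have hμ0 : 0 < (μ (ball 0 r)).toReal :=
    ENNReal.toReal_pos (mu_ball_pos hr0).ne' (ne_top_of_le_ne_top ENNReal.ofReal_ne_top
      (mu_ball_le hr0 hr))
  rw [rpow_div_log_rpow_eq hr0 hL (by positivity) (by positivity)]
  gcongr

/-- For `dν = (1/w) dx` on `ℝ²`, one has `ν(B(0,r)) ≍ r / log(1/r)` for small `r`; consequently,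
for every `q > 2`, `r ν(B(0,r))^{1/q} / μ(B(0,r))^{1/2} → ∞` as `r → 0`, where `dμ = w dx`. -/
theorem stmt11 :
    (∃ c C r₁ : ℝ, 0 < c ∧ 0 < C ∧ 0 < r₁ ∧ ∀ r : ℝ, 0 < r → r < r₁ →
      ENNReal.ofReal (c * r / Real.log (1 / r)) ≤
          (volume.withDensity fun x => ENNReal.ofReal (wWeight x)⁻¹)
            (ball (0 : EuclideanSpace ℝ (Fin 2)) r) ∧
        (volume.withDensity fun x => ENNReal.ofReal (wWeight x)⁻¹)
            (ball (0 : EuclideanSpace ℝ (Fin 2)) r) ≤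
          ENNReal.ofReal (C * r / Real.log (1 / r))) ∧
    ∀ q : ℝ, 2 < q →
      Tendsto (fun r : ℝ =>
          r * ((volume.withDensity fun x => ENNReal.ofReal (wWeight x)⁻¹)
                (ball (0 : EuclideanSpace ℝ (Fin 2)) r)).toReal ^ (1 / q) /
            ((volume.withDensity fun x => ENNReal.ofReal (wWeight x))
                (ball (0 : EuclideanSpace ℝ (Fin 2)) r)).toReal ^ (1 / 2 : ℝ))
        (𝓝[>] 0) atTop := by
  refine ⟨⟨π / 2, 2 * π, 1 / 2, by positivity, by positivity, by norm_num,
    fun r hr0 hr => ⟨le_nu_ball hr0 hr.le, nu_ball_le hr0 hr.le⟩⟩, fun q hq => ?_⟩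
  have hs : 0 < 1 / 2 - 1 / q := by
    rw [sub_pos, div_lt_div_iff₀ (by linarith) two_pos]; linarith
  refine tendsto_atTop_mono' _ ?_
    ((tendsto_one_div_rpow_div_log_rpow_nhdsGT_zero hs (1 / q + 1 / 2)).const_mul_atTop
      (by positivity : 0 < (π / 2) ^ (1 / q) / (2 * π) ^ (1 / 2 : ℝ)))
  filter_upwards [Ioo_mem_nhdsGT (by norm_num : (0 : ℝ) < 1 / 2)] with r hr
  exact le_rpow_nu_ball_div_rpow_mu_ball (by linarith) hr.1 hr.2.le
end
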